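/- arXiv:2511.04822 — 2 statements merged into one kernel-verified Lean document; each statement's English description precedes it below -/
import Mathlib

section
/- Let H be an ICC group, K a group, and γ, γ' : K → H injective group homomorphisms whose images γ(K) and γ'(K) have finite index in H. Let a, a' be positive integers and ρ : K → U_a(ℂ), ρ' : K → U_{a'}(ℂ) unitary representations that are irreducible, in the sense that every a×a complex matrix T with ρ(g) T = T ρ(g) for all g ∈ K is a scalar multiple of the identity, and likewise for ρ'. Suppose x : H → M_{a×a'}(ℂ) satisfies ∑_{h ∈ H} ‖x(h)‖² < ∞ (Frobenius norm), x is not identically zero, and x(γ(g) h γ'(g)⁻¹) = ρ(g) · x(h) · ρ'(g)* for every g ∈ K and h ∈ H. Then a = a', there is exactly one h₀ ∈ H with x(h₀) ≠ 0, and there exist a nonzero scalar c ∈ ℂ and a unitary matrix U ∈ U_a(ℂ) such that x(h₀) = c U, γ(g) h₀ = h₀ γ'(g) for every g ∈ K, and ρ(g) U = U ρ'(g) for every g ∈ K. -/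
/-!
A square-summable function on `H` invariant under the twisted conjugation
`h ↦ γ g * h * (γ' g)⁻¹` has finite orbits on its support, so each support point has a
finite-index stabilizer in `K`. For two support points `h₁, h₂`, the image under `γ'` of their
common stabilizer is a finite-index subgroup centralizing `h₂⁻¹ * h₁`, whose conjugacy class is
then finite; ICC forces `h₁ = h₂`. Applied to `h ↦ ‖x h‖²`, this puts the support of `x` at a
single point `h₀` fixed by the twisted action, so `M = x h₀` intertwines `ρ` and `ρ'`. By Schur,
`M * Mᴴ` and `Mᴴ * M` are the same positive scalar `r`; traces give `a = a'`, and `r^(-1/2) • M`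
is unitary.
-/

open Matrix MulAction

def IsICC (H : Type*) [Group H] : Prop :=
  ∀ h : H, h ≠ 1 → {x : H | ∃ y : H, x = y * h * y⁻¹}.Infinite

section Groups

variable {G H : Type*} [Group G] [Group H]

theorem Subgroup.finiteIndex_map (f : G →* H) [f.range.FiniteIndex] (L : Subgroup G)
    [L.FiniteIndex] : (L.map f).FiniteIndex :=
  ⟨by
    rw [Subgroup.index_map]
    exact mul_ne_zero (Subgroup.finiteIndex_of_le le_sup_left).index_ne_zero
      Subgroup.FiniteIndex.index_ne_zero⟩

theorem finite_conjugates_of_finiteIndex_centralizer {d : H}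
    [(Subgroup.centralizer {d}).FiniteIndex] : {x : H | ∃ y : H, x = y * d * y⁻¹}.Finite := by
  have horbit : {x : H | ∃ y : H, x = y * d * y⁻¹} = orbit (ConjAct H) d := by
    ext x
    exact ⟨fun ⟨y, hy⟩ => ⟨ConjAct.toConjAct y, hy.symm⟩,
      fun ⟨y, hy⟩ => ⟨ConjAct.ofConjAct y, hy.symm⟩⟩
  rw [horbit]
  apply Set.finite_of_ncard_ne_zero
  rw [← index_stabilizer, ConjAct.stabilizer_eq_centralizer]
  -- `ConjAct H` is a type synonym, so its centralizer of `d` is definitionally that of `H`.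
  exact Subgroup.FiniteIndex.index_ne_zero (H := Subgroup.centralizer {d})

theorem IsICC.eq_one_of_le_centralizer (hH : IsICC H) {C : Subgroup H} [C.FiniteIndex] {d : H}
    (hC : C ≤ Subgroup.centralizer {d}) : d = 1 := by
  have := Subgroup.finiteIndex_of_le hC
  by_contra hd
  exact hH d hd finite_conjugates_of_finiteIndex_centralizer

theorem finiteIndex_stabilizer_of_summable {X : Type*} [MulAction G X] {f : X → ℝ}
    (hf : Summable f) (hinv : ∀ (g : G) (x : X), f (g • x) = f x) {x : X} (hx : 0 < f x) :
    (stabilizer G x).FiniteIndex := by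
  have hlevel : {y | f x ≤ f y}.Finite := by
    simpa using Filter.eventually_cofinite.mp
      (hf.tendsto_cofinite_zero.eventually (gt_mem_nhds hx))
  refine ⟨?_⟩
  rw [index_stabilizer]
  refine ((Set.ncard_pos (hlevel.subset ?_)).mpr ⟨x, mem_orbit_self x⟩).ne'
  rintro _ ⟨g, rfl⟩
  exact (hinv g x).ge

end Groups

section TwistedConjugation

variable {K H : Type*} [Group K] [Group H]

abbrev twistedConjAction (γ γ' : K →* H) : MulAction K H where
  smul g h := γ g * h * (γ' g)⁻¹
  one_smul h := by simp [HSMul.hSMul]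
  mul_smul g g' h := by simp [HSMul.hSMul, mul_assoc]

variable {γ γ' : K →* H}

theorem IsICC.eq_of_forall_mem (hH : IsICC H) [γ'.range.FiniteIndex] (L : Subgroup K)
    [L.FiniteIndex] {h₁ h₂ : H} (h₁L : ∀ g ∈ L, γ g * h₁ = h₁ * γ' g)
    (h₂L : ∀ g ∈ L, γ g * h₂ = h₂ * γ' g) : h₁ = h₂ := by
  have hcomm : L.map γ' ≤ Subgroup.centralizer {h₂⁻¹ * h₁} := by
    rintro _ ⟨g, hg, rfl⟩
    rw [Subgroup.mem_centralizer_singleton_iff]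
    calc γ' g * (h₂⁻¹ * h₁) = h₂⁻¹ * (γ g * h₂) * (h₂⁻¹ * h₁) := by
          rw [h₂L g hg, inv_mul_cancel_left]
      _ = h₂⁻¹ * (γ g * h₁) := by group
      _ = h₂⁻¹ * h₁ * γ' g := by rw [h₁L g hg, mul_assoc]
  have := Subgroup.finiteIndex_map γ' L
  exact (inv_mul_eq_one.mp (hH.eq_one_of_le_centralizer hcomm)).symm

theorem IsICC.eq_of_summable_twistedConj_invariant (hH : IsICC H) [γ'.range.FiniteIndex]
    {f : H → ℝ} (hf : Summable f) (hinv : ∀ g h, f (γ g * h * (γ' g)⁻¹) = f h) {h₁ h₂ : H}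
    (h₁pos : 0 < f h₁) (h₂pos : 0 < f h₂) : h₁ = h₂ := by
  let := twistedConjAction γ γ'
  have hstab : ∀ {h : H}, ∀ g ∈ stabilizer K h, γ g * h = h * γ' g :=
    fun _ hg => mul_inv_eq_iff_eq_mul.mp hg
  have := finiteIndex_stabilizer_of_summable hf hinv h₁pos
  have := finiteIndex_stabilizer_of_summable hf hinv h₂pos
  exact hH.eq_of_forall_mem (stabilizer K h₁ ⊓ stabilizer K h₂)
    (fun g hg => hstab g hg.1) (fun g hg => hstab g hg.2)

theorem IsICC.mul_eq_mul_of_summable_twistedConj_invariant (hH : IsICC H)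
    [γ'.range.FiniteIndex] {f : H → ℝ} (hf : Summable f)
    (hinv : ∀ g h, f (γ g * h * (γ' g)⁻¹) = f h) {h₀ : H} (hpos : 0 < f h₀) (g : K) :
    γ g * h₀ = h₀ * γ' g :=
  mul_inv_eq_iff_eq_mul.mp <|
    hH.eq_of_summable_twistedConj_invariant hf hinv ((hinv g h₀).symm ▸ hpos) hpos

end TwistedConjugation

section FrobeniusNorm

variable {m n : Type*} [Fintype m] [Fintype n]

theorem Matrix.trace_mul_conjTranspose_eq_sum_norm_sq (M : Matrix m n ℂ) :
    (M * Mᴴ).trace = ((∑ i, ∑ j, ‖M i j‖ ^ 2 : ℝ) : ℂ) := by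
  simp only [trace, diag, mul_apply, conjTranspose_apply, Complex.ofReal_sum]
  refine Finset.sum_congr rfl fun i _ => Finset.sum_congr rfl fun j _ => ?_
  rw [Complex.star_def, Complex.mul_conj, Complex.normSq_eq_norm_sq, Complex.ofReal_pow]

open ComplexOrder in
theorem Matrix.sum_norm_sq_pos_iff (M : Matrix m n ℂ) :
    0 < ∑ i, ∑ j, ‖M i j‖ ^ 2 ↔ M ≠ 0 := by
  rw [(by positivity : 0 ≤ ∑ i, ∑ j, ‖M i j‖ ^ 2).lt_iff_ne', ne_eq, ne_eq,
    ← Complex.ofReal_eq_zero, ← trace_mul_conjTranspose_eq_sum_norm_sq,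
    trace_mul_conjTranspose_self_eq_zero_iff]

theorem Matrix.sum_norm_sq_unitary_mul_mul_star [DecidableEq m] [DecidableEq n]
    (M : Matrix m n ℂ) {u : Matrix m m ℂ} {v : Matrix n n ℂ} (hu : u ∈ unitaryGroup m ℂ)
    (hv : v ∈ unitaryGroup n ℂ) :
    ∑ i, ∑ j, ‖(u * M * star v) i j‖ ^ 2 = ∑ i, ∑ j, ‖M i j‖ ^ 2 := by
  have hu' : uᴴ * u = 1 := mem_unitaryGroup_iff'.mp hu
  have hv' : vᴴ * v = 1 := mem_unitaryGroup_iff'.mp hv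
  have htrace : (u * M * star v * (u * M * star v)ᴴ).trace = (M * Mᴴ).trace := by
    rw [star_eq_conjTranspose, conjTranspose_mul, conjTranspose_mul, conjTranspose_conjTranspose,
      show u * M * vᴴ * (v * (Mᴴ * uᴴ)) = u * (M * (vᴴ * v) * Mᴴ) * uᴴ by
        simp only [Matrix.mul_assoc],
      trace_mul_comm, ← Matrix.mul_assoc, hu', hv', Matrix.one_mul, Matrix.mul_one]
  exact_mod_cast (trace_mul_conjTranspose_eq_sum_norm_sq _).symm.trans
    (htrace.trans (trace_mul_conjTranspose_eq_sum_norm_sq M))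

end FrobeniusNorm

section Intertwiners

variable {K : Type*} [Group K] {m n : Type*} [Fintype m] [Fintype n] [DecidableEq m]
  [DecidableEq n]

def IsIntertwiner (ρ : K →* unitaryGroup m ℂ) (ρ' : K →* unitaryGroup n ℂ) (M : Matrix m n ℂ) :
    Prop :=
  ∀ g, (ρ g : Matrix m m ℂ) * M = M * (ρ' g : Matrix n n ℂ)

def IsIrreducibleRep (ρ : K →* unitaryGroup m ℂ) : Prop :=
  ∀ T : Matrix m m ℂ, IsIntertwiner ρ ρ T → ∃ c : ℂ, T = c • 1

variable {ρ : K →* unitaryGroup m ℂ} {ρ' : K →* unitaryGroup n ℂ} {M : Matrix m n ℂ}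

namespace IsIntertwiner

theorem of_forall_eq_mul_mul_star
    (h : ∀ g, M = (ρ g : Matrix m m ℂ) * M * star (ρ' g : Matrix n n ℂ)) :
    IsIntertwiner ρ ρ' M := fun g => by
  conv_rhs => rw [h g]
  rw [Matrix.mul_assoc, UnitaryGroup.star_mul_self, Matrix.mul_one]

theorem conjTranspose (hM : IsIntertwiner ρ ρ' M) : IsIntertwiner ρ' ρ Mᴴ := fun g => by
  simpa [conjTranspose_mul, star_eq_conjTranspose] using
    (congrArg Matrix.conjTranspose (hM g⁻¹)).symm

theorem mul {l : Type*} [Fintype l] [DecidableEq l] {ρ'' : K →* unitaryGroup l ℂ}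
    {N : Matrix n l ℂ} (hM : IsIntertwiner ρ ρ' M) (hN : IsIntertwiner ρ' ρ'' N) :
    IsIntertwiner ρ ρ'' (M * N) := fun g => by
  rw [← Matrix.mul_assoc, hM g, Matrix.mul_assoc, hN g, Matrix.mul_assoc]

theorem exists_mul_conjTranspose_eq_smul_one (hρ : IsIrreducibleRep ρ)
    (hρ' : IsIrreducibleRep ρ') (hM : IsIntertwiner ρ ρ' M) (hM0 : M ≠ 0) :
    ∃ r : ℝ, 0 < r ∧ M * Mᴴ = (r : ℂ) • 1 ∧ Mᴴ * M = (r : ℂ) • 1 := by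
  obtain ⟨c, hc⟩ := hρ _ (hM.mul hM.conjTranspose)
  obtain ⟨c', hc'⟩ := hρ' _ (hM.conjTranspose.mul hM)
  have hcc' : c = c' := smul_left_injective ℂ hM0 <| by
    calc c • M = M * Mᴴ * M := by rw [hc, Matrix.smul_mul, Matrix.one_mul]
      _ = c' • M := by rw [Matrix.mul_assoc, hc', Matrix.mul_smul, Matrix.mul_one]
  have hS := (sum_norm_sq_pos_iff M).mpr hM0
  have htrace : c * Fintype.card m = ((∑ i, ∑ j, ‖M i j‖ ^ 2 : ℝ) : ℂ) := by
    rw [← trace_mul_conjTranspose_eq_sum_norm_sq, hc, trace_smul, trace_one, smul_eq_mul]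
  have hm : 0 < Fintype.card m := Nat.pos_of_ne_zero fun h0 => by
    rw [h0, Nat.cast_zero, mul_zero] at htrace
    exact hS.ne' (by exact_mod_cast htrace.symm)
  refine ⟨(∑ i, ∑ j, ‖M i j‖ ^ 2) / Fintype.card m, by positivity, ?_⟩
  have hcr : c = (((∑ i, ∑ j, ‖M i j‖ ^ 2) / Fintype.card m : ℝ) : ℂ) := by
    rw [Complex.ofReal_div, ← htrace, Complex.ofReal_natCast,
      mul_div_cancel_right₀ _ (by exact_mod_cast hm.ne')]
  rw [← hcr, hc, hc', hcc']
  exact ⟨rfl, rfl⟩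

theorem card_eq (hρ : IsIrreducibleRep ρ) (hρ' : IsIrreducibleRep ρ')
    (hM : IsIntertwiner ρ ρ' M) (hM0 : M ≠ 0) : Fintype.card m = Fintype.card n := by
  obtain ⟨r, hr, hMMh, hMhM⟩ := hM.exists_mul_conjTranspose_eq_smul_one hρ hρ' hM0
  have htrace := congrArg Matrix.trace hMMh
  rw [trace_mul_comm, hMhM, trace_smul, trace_smul, trace_one, trace_one, smul_eq_mul,
    smul_eq_mul] at htrace
  exact_mod_cast mul_left_cancel₀ (Complex.ofReal_ne_zero.mpr hr.ne') htrace.symm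

theorem exists_eq_smul_mem_unitaryGroup {ρ ρ' : K →* unitaryGroup n ℂ} {M : Matrix n n ℂ}
    (hρ : IsIrreducibleRep ρ) (hρ' : IsIrreducibleRep ρ') (hM : IsIntertwiner ρ ρ' M)
    (hM0 : M ≠ 0) : ∃ c : ℂ, c ≠ 0 ∧ ∃ U ∈ unitaryGroup n ℂ, M = c • U ∧ IsIntertwiner ρ ρ' U := by
  obtain ⟨r, hr, -, hMhM⟩ := hM.exists_mul_conjTranspose_eq_smul_one hρ hρ' hM0
  set s : ℂ := (Real.sqrt r : ℂ)
  have hs : s ≠ 0 := Complex.ofReal_ne_zero.mpr (Real.sqrt_pos.mpr hr).ne'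
  have hss : star s * s = r := by
    rw [Complex.star_def, Complex.conj_ofReal, ← Complex.ofReal_mul, Real.mul_self_sqrt hr.le]
  refine ⟨s, hs, s⁻¹ • M, ?_, by rw [smul_smul, mul_inv_cancel₀ hs, one_smul],
    fun g => by rw [Matrix.mul_smul, hM g, Matrix.smul_mul]⟩
  rw [mem_unitaryGroup_iff', star_smul, star_eq_conjTranspose, smul_mul_smul_comm, hMhM,
    smul_smul, star_inv₀, ← mul_inv, hss, inv_mul_cancel₀ (Complex.ofReal_ne_zero.mpr hr.ne'),
    one_smul]

end IsIntertwiner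

end Intertwiners

theorem icc_intertwiner_structure_general
    {H K : Type*} [Group H] [Group K]
    (hicc : ∀ h : H, h ≠ 1 → {x : H | ∃ y : H, x = y * h * y⁻¹}.Infinite)
    {a a' : ℕ}
    (γ γ' : K →* H)
    (hγ' : γ'.range.FiniteIndex)
    (ρ : K →* Matrix.unitaryGroup (Fin a) ℂ)
    (ρ' : K →* Matrix.unitaryGroup (Fin a') ℂ)
    (hirr : ∀ T : Matrix (Fin a) (Fin a) ℂ,
      (∀ g : K, (ρ g : Matrix (Fin a) (Fin a) ℂ) * T = T * (ρ g : Matrix (Fin a) (Fin a) ℂ)) →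
      ∃ c : ℂ, T = c • (1 : Matrix (Fin a) (Fin a) ℂ))
    (hirr' : ∀ T : Matrix (Fin a') (Fin a') ℂ,
      (∀ g : K, (ρ' g : Matrix (Fin a') (Fin a') ℂ) * T
          = T * (ρ' g : Matrix (Fin a') (Fin a') ℂ)) →
      ∃ c : ℂ, T = c • (1 : Matrix (Fin a') (Fin a') ℂ))
    (x : H → Matrix (Fin a) (Fin a') ℂ)
    (hsum : Summable fun h : H => ∑ i : Fin a, ∑ j : Fin a', ‖x h i j‖ ^ 2)
    (hxne : x ≠ 0)
    (hrel : ∀ (g : K) (h : H),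
      x (γ g * h * (γ' g)⁻¹)
        = (ρ g : Matrix (Fin a) (Fin a) ℂ) * x h * star (ρ' g : Matrix (Fin a') (Fin a') ℂ)) :
    ∃ (haa' : a = a') (h₀ : H) (c : ℂ) (U : Matrix (Fin a) (Fin a) ℂ),
      c ≠ 0 ∧ U ∈ Matrix.unitaryGroup (Fin a) ℂ ∧
      {h : H | x h ≠ 0} = {h₀} ∧
      x h₀ = c • U.submatrix id (Fin.cast haa'.symm) ∧
      (∀ g : K, γ g * h₀ = h₀ * γ' g) ∧
      (∀ g : K, (ρ g : Matrix (Fin a) (Fin a) ℂ) * U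
        = U * ((ρ' g : Matrix (Fin a') (Fin a') ℂ).submatrix
            (Fin.cast haa') (Fin.cast haa'))) := by
  have hinv (g : K) (h : H) :
      ∑ i, ∑ j, ‖x (γ g * h * (γ' g)⁻¹) i j‖ ^ 2 = ∑ i, ∑ j, ‖x h i j‖ ^ 2 := by
    rw [hrel]
    exact sum_norm_sq_unitary_mul_mul_star _ (ρ g).2 (ρ' g).2
  have hpos (h : H) : 0 < ∑ i, ∑ j, ‖x h i j‖ ^ 2 ↔ x h ≠ 0 := sum_norm_sq_pos_iff (x h)
  obtain ⟨h₀, hh₀⟩ := Function.ne_iff.mp hxne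
  have hsupp : {h : H | x h ≠ 0} = {h₀} := Set.ext fun h =>
    ⟨fun hh => IsICC.eq_of_summable_twistedConj_invariant hicc hsum hinv ((hpos h).2 hh)
      ((hpos h₀).2 hh₀), fun hh => hh ▸ hh₀⟩
  have hfix := IsICC.mul_eq_mul_of_summable_twistedConj_invariant hicc hsum hinv ((hpos h₀).2 hh₀)
  have hM : IsIntertwiner ρ ρ' (x h₀) := .of_forall_eq_mul_mul_star fun g => by
    rw [← hrel, mul_inv_eq_of_eq_mul (hfix g)]
  have haa' : a = a' := by simpa using hM.card_eq hirr hirr' hh₀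
  subst haa'
  obtain ⟨c, hc, U, hU, hxU, hUρ⟩ := hM.exists_eq_smul_mem_unitaryGroup hirr hirr' hh₀
  exact ⟨rfl, h₀, c, U, hc, hU, hsupp, by simpa using hxU, hfix, fun g => by simpa using hUρ g⟩

/-- (Claim on intertwiners.) Let `H` be an ICC group, `K` a group, and
`γ, γ' : K → H` injective homomorphisms with finite index images. Let `ρ, ρ'` be irreducible
unitary representations of `K` of dimensions `a, a'`. If `x : H → M_{a×a'}(ℂ)` is
square-summable (Frobenius norm), nonzero, and satisfies
`x (γ g * h * γ' g⁻¹) = ρ g * x h * (ρ' g)*` for all `g, h`, then `a = a'`, `x` is supported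
at a single `h₀`, `x h₀` is a nonzero scalar multiple of a unitary `U`, `h₀` intertwines
`γ` and `γ'`, and `U` intertwines `ρ` and `ρ'`. -/
theorem icc_intertwiner_structure
    {H K : Type*} [Group H] [Group K]
    (hicc : ∀ h : H, h ≠ 1 → {x : H | ∃ y : H, x = y * h * y⁻¹}.Infinite)
    {a a' : ℕ} (ha : 0 < a) (ha' : 0 < a')
    (γ γ' : K →* H)
    (hγinj : Function.Injective γ) (hγ'inj : Function.Injective γ')
    (hγ : γ.range.FiniteIndex) (hγ' : γ'.range.FiniteIndex)
    (ρ : K →* Matrix.unitaryGroup (Fin a) ℂ)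
    (ρ' : K →* Matrix.unitaryGroup (Fin a') ℂ)
    (hirr : ∀ T : Matrix (Fin a) (Fin a) ℂ,
      (∀ g : K, (ρ g : Matrix (Fin a) (Fin a) ℂ) * T = T * (ρ g : Matrix (Fin a) (Fin a) ℂ)) →
      ∃ c : ℂ, T = c • (1 : Matrix (Fin a) (Fin a) ℂ))
    (hirr' : ∀ T : Matrix (Fin a') (Fin a') ℂ,
      (∀ g : K, (ρ' g : Matrix (Fin a') (Fin a') ℂ) * T
          = T * (ρ' g : Matrix (Fin a') (Fin a') ℂ)) →
      ∃ c : ℂ, T = c • (1 : Matrix (Fin a') (Fin a') ℂ))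
    (x : H → Matrix (Fin a) (Fin a') ℂ)
    (hsum : Summable fun h : H => ∑ i : Fin a, ∑ j : Fin a', ‖x h i j‖ ^ 2)
    (hxne : x ≠ 0)
    (hrel : ∀ (g : K) (h : H),
      x (γ g * h * (γ' g)⁻¹)
        = (ρ g : Matrix (Fin a) (Fin a) ℂ) * x h * star (ρ' g : Matrix (Fin a') (Fin a') ℂ)) :
    ∃ (haa' : a = a') (h₀ : H) (c : ℂ) (U : Matrix (Fin a) (Fin a) ℂ),
      c ≠ 0 ∧ U ∈ Matrix.unitaryGroup (Fin a) ℂ ∧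
      {h : H | x h ≠ 0} = {h₀} ∧
      x h₀ = c • U.submatrix id (Fin.cast haa'.symm) ∧
      (∀ g : K, γ g * h₀ = h₀ * γ' g) ∧
      (∀ g : K, (ρ g : Matrix (Fin a) (Fin a) ℂ) * U
        = U * ((ρ' g : Matrix (Fin a') (Fin a') ℂ).submatrix
            (Fin.cast haa') (Fin.cast haa'))) :=
  icc_intertwiner_structure_general hicc γ γ' hγ' ρ ρ' hirr hirr' x hsum hxne hrel
end

section
/- Let G be an ICC group and K ≤ G a subgroup of finite index. Then K is an ICC group: for every k ∈ K with k ≠ 1, the set {x k x⁻¹ : x ∈ K} is infinite. -/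
/-!
The `G`-conjugacy class of `k` is covered by the translates `r • C` of its `K`-conjugacy class `C`,
where `r` runs over a (finite) set of representatives of `G ⧸ K`. So if `C` were finite, the
`G`-conjugacy class of `k` would be finite too.
-/

open MulAction
open scoped Pointwise

theorem MulAction.orbit_subset_iUnion_smul_orbit_subgroup {G α : Type*} [Group G] [MulAction G α]
    (H : Subgroup G) (a : α) :
    orbit G a ⊆ ⋃ q : G ⧸ H, q.out • orbit H a := by
  rintro _ ⟨g, rfl⟩
  set r := (g : G ⧸ H).out
  have hr : r⁻¹ * g ∈ H := QuotientGroup.leftRel_apply.mp (Quotient.exact' (g : G ⧸ H).out_eq')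
  refine Set.mem_iUnion.mpr ⟨g, Set.mem_smul_set.mpr ⟨(r⁻¹ * g) • a, ⟨⟨_, hr⟩, rfl⟩, ?_⟩⟩
  rw [smul_smul, mul_inv_cancel_left]

theorem MulAction.finite_orbit_of_finite_orbit_subgroup {G α : Type*} [Group G] [MulAction G α]
    {H : Subgroup G} [H.FiniteIndex] {a : α} (h : (orbit H a).Finite) : (orbit G a).Finite :=
  (Set.finite_iUnion fun _ => h.smul_set).subset (orbit_subset_iUnion_smul_orbit_subgroup H a)

namespace ConjAct

variable {G : Type*} [Group G]

theorem orbit_eq_setOf_conj (g : G) :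
    orbit (ConjAct G) g = {x | ∃ y : G, x = y * g * y⁻¹} := by
  ext x
  constructor
  · rintro ⟨c, rfl⟩
    exact ⟨ofConjAct c, smul_def c g⟩
  · rintro ⟨y, rfl⟩
    exact ⟨toConjAct y, toConjAct_smul y g⟩

theorem orbit_map_toConjAct (K : Subgroup G) (g : G) :
    orbit (K.map ((toConjAct : G ≃* ConjAct G) : G →* ConjAct G)) g =
      {x | ∃ y ∈ K, x = y * g * y⁻¹} := by
  ext x
  constructor
  · rintro ⟨⟨_, y, hy, rfl⟩, rfl⟩
    exact ⟨y, hy, (toConjAct_smul y g).symm⟩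
  · rintro ⟨y, hy, rfl⟩
    exact ⟨⟨toConjAct y, y, hy, rfl⟩, toConjAct_smul y g⟩

end ConjAct

/-- A finite index subgroup of an ICC group is ICC. -/
theorem finiteIndex_subgroup_of_icc_is_icc
    {G : Type*} [Group G]
    (hicc : ∀ g : G, g ≠ 1 → {x : G | ∃ y : G, x = y * g * y⁻¹}.Infinite)
    (K : Subgroup G) (hK : K.FiniteIndex) :
    ∀ k ∈ K, k ≠ 1 → {x : G | ∃ y ∈ K, x = y * k * y⁻¹}.Infinite := by
  intro k _ hk hfin
  let K' := K.map ((ConjAct.toConjAct : G ≃* ConjAct G) : G →* ConjAct G)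
  have : K'.FiniteIndex := ⟨by rw [K.index_map_equiv]; exact hK.index_ne_zero⟩
  rw [← ConjAct.orbit_map_toConjAct] at hfin
  apply hicc k hk
  rw [← ConjAct.orbit_eq_setOf_conj]
  exact finite_orbit_of_finite_orbit_subgroup hfin
end
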